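/- Let H be a finite-dimensional complex inner product space and let B and B' be maximal Boolean sublattices of Submodule ℂ H. Then there exists a unitary operator U on H such that { Submodule.map U K | K ∈ B } = B'. -/

import Mathlib

open Submodule

/-- A subset `B` of the lattice of subspaces of a complex inner product space is a
*Boolean sublattice* if it contains `⊥` and `⊤`, is closed under `⊓`, `⊔` and
orthogonal complement, and satisfies the distributive law on its elements. -/
def IsBooleanSublattice {H : Type*} [NormedAddCommGroup H] [InnerProductSpace ℂ H]
    (B : Set (Submodule ℂ H)) : Prop :=
  ⊥ ∈ B ∧ ⊤ ∈ B ∧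
  (∀ x ∈ B, ∀ y ∈ B, x ⊓ y ∈ B) ∧
  (∀ x ∈ B, ∀ y ∈ B, x ⊔ y ∈ B) ∧
  (∀ x ∈ B, xᗮ ∈ B) ∧
  (∀ x ∈ B, ∀ y ∈ B, ∀ z ∈ B, x ⊓ (y ⊔ z) = (x ⊓ y) ⊔ (x ⊓ z))

/-- A Boolean sublattice is *maximal* if it is not properly contained in any other
Boolean sublattice. -/
def IsMaximalBooleanSublattice {H : Type*} [NormedAddCommGroup H] [InnerProductSpace ℂ H]
    (B : Set (Submodule ℂ H)) : Prop :=
  IsBooleanSublattice B ∧ ∀ B' : Set (Submodule ℂ H), IsBooleanSublattice B' → B ⊆ B' → B' = B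

/-!
The minimal nonzero elements (atoms) of a Boolean sublattice `B` are pairwise orthogonal: an atom
`a` and any `x ∈ B` satisfy `a = (a ⊓ x) ⊔ (a ⊓ xᗮ)`, so `a` lies in `x` or in `xᗮ`. Peeling off
atoms shows that they span `H`, so orthonormal bases of the atoms glue to an orthonormal basis of
`H` every vector of which lies in `x` or in `xᗮ` for each `x ∈ B`; hence every element of `B` is
spanned by a subset of this basis. Spans of subsets of an orthonormal basis form a Boolean
sublattice, so a maximal `B` is exactly such a lattice, and the unitary carrying one orthonormal
basis to another carries the corresponding lattices onto each other.
-/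

namespace Submodule

variable {𝕜 E : Type*} [RCLike 𝕜] [NormedAddCommGroup E] [InnerProductSpace 𝕜 E]

theorem IsOrtho.orthogonal_eq_of_sup_eq_top {U V : Submodule 𝕜 E} [V.HasOrthogonalProjection]
    (hUV : U ⟂ V) (hsup : U ⊔ V = ⊤) : Uᗮ = V :=
  calc Uᗮ = V ⊔ Vᗮ ⊓ Uᗮ :=
        (sup_orthogonal_inf_of_hasOrthogonalProjection (isOrtho_iff_le.mp hUV.symm)).symm
    _ = V := by rw [inf_orthogonal, sup_comm V U, hsup, top_orthogonal_eq_bot, sup_bot_eq]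

end Submodule

namespace OrthonormalBasis

variable {𝕜 E E' ι ι' : Type*} [RCLike 𝕜] [NormedAddCommGroup E] [InnerProductSpace 𝕜 E]
  [NormedAddCommGroup E'] [InnerProductSpace 𝕜 E'] [Fintype ι] [Fintype ι']
  (b : OrthonormalBasis ι 𝕜 E)

def coordinateSubspaces : Set (Submodule 𝕜 E) :=
  Set.range fun S : Set ι => span 𝕜 (b '' S)

theorem span_image_sup_span_image_compl (S : Set ι) :
    span 𝕜 (b '' S) ⊔ span 𝕜 (b '' Sᶜ) = ⊤ := by
  rw [← span_union, ← Set.image_union, Set.union_compl_self, Set.image_univ, ← b.coe_toBasis,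
    b.toBasis.span_eq]

theorem orthogonal_span_image (S : Set ι) : (span 𝕜 (b '' S))ᗮ = span 𝕜 (b '' Sᶜ) := by
  have := FiniteDimensional.span_of_finite 𝕜 (Sᶜ.toFinite.image b)
  refine IsOrtho.orthogonal_eq_of_sup_eq_top ?_ (b.span_image_sup_span_image_compl S)
  rw [isOrtho_span]
  rintro _ ⟨i, hi, rfl⟩ _ ⟨j, hj, rfl⟩
  exact b.orthonormal.2 (ne_of_mem_of_not_mem hi hj)

theorem span_image_inter (S T : Set ι) :
    span 𝕜 (b '' (S ∩ T)) = span 𝕜 (b '' S) ⊓ span 𝕜 (b '' T) := by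
  rw [← compl_compl (S ∩ T), ← b.orthogonal_span_image, Set.compl_inter, Set.image_union,
    span_union, ← inf_orthogonal, b.orthogonal_span_image, b.orthogonal_span_image, compl_compl,
    compl_compl]

theorem span_image_setOf_mem_eq {K : Submodule 𝕜 E} (h : ∀ i, b i ∈ K ∨ b i ∈ Kᗮ) :
    span 𝕜 (b '' {i | b i ∈ K}) = K := by
  refine le_antisymm (span_le.2 <| Set.image_subset_iff.2 fun i hi => hi) ?_
  rw [← compl_compl {i | b i ∈ K}, ← b.orthogonal_span_image, ← isOrtho_iff_le, isOrtho_comm,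
    isOrtho_iff_le, span_le, Set.image_subset_iff]
  exact fun i hi => (h i).resolve_left hi

theorem coordinateSubspaces_reindex (σ : ι ≃ ι') :
    (b.reindex σ).coordinateSubspaces = b.coordinateSubspaces := by
  rw [coordinateSubspaces, coordinateSubspaces, b.coe_reindex]
  simp_rw [Set.image_comp]
  exact (Set.image_surjective.2 σ.symm.surjective).range_comp fun S => span 𝕜 (b '' S)

theorem coordinateSubspaces_map (U : E ≃ₗᵢ[𝕜] E') :
    (b.map U).coordinateSubspaces =
      Submodule.map (U.toLinearEquiv : E →ₗ[𝕜] E') '' b.coordinateSubspaces := by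
  rw [coordinateSubspaces, coordinateSubspaces, ← Set.range_comp]
  congr 1
  funext S
  rw [Function.comp_apply, map_span, ← Set.image_comp]
  rfl

end OrthonormalBasis

theorem OrthonormalBasis.isBooleanSublattice_coordinateSubspaces {ι H : Type*} [Fintype ι]
    [NormedAddCommGroup H] [InnerProductSpace ℂ H] (b : OrthonormalBasis ι ℂ H) :
    IsBooleanSublattice b.coordinateSubspaces := by
  refine ⟨⟨∅, by simp⟩, ⟨Set.univ, ?_⟩, ?_, ?_, ?_, ?_⟩
  · dsimp only
    rw [Set.image_univ, ← b.coe_toBasis, b.toBasis.span_eq]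
  · rintro _ ⟨S, rfl⟩ _ ⟨T, rfl⟩
    exact ⟨S ∩ T, b.span_image_inter S T⟩
  · rintro _ ⟨S, rfl⟩ _ ⟨T, rfl⟩
    exact ⟨S ∪ T, by simp only [Set.image_union, span_union]⟩
  · rintro _ ⟨S, rfl⟩
    exact ⟨Sᶜ, (b.orthogonal_span_image S).symm⟩
  · rintro _ ⟨S, rfl⟩ _ ⟨T, rfl⟩ _ ⟨R, rfl⟩
    simp only [← b.span_image_inter, ← span_union, ← Set.image_union, Set.inter_union_distrib_left]

def atomsOf {H : Type*} [NormedAddCommGroup H] [InnerProductSpace ℂ H]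
    (B : Set (Submodule ℂ H)) : Set (Submodule ℂ H) :=
  {a | Minimal (fun x => x ∈ B ∧ x ≠ ⊥) a}

namespace IsBooleanSublattice

variable {H : Type*} [NormedAddCommGroup H] [InnerProductSpace ℂ H] {B : Set (Submodule ℂ H)}
  (hB : IsBooleanSublattice B)
include hB

theorem top_mem : ⊤ ∈ B := hB.2.1

theorem inf_mem {x y : Submodule ℂ H} (hx : x ∈ B) (hy : y ∈ B) : x ⊓ y ∈ B :=
  hB.2.2.1 x hx y hy

theorem orthogonal_mem {x : Submodule ℂ H} (hx : x ∈ B) : xᗮ ∈ B := hB.2.2.2.2.1 x hx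

theorem inf_sup_inf_orthogonal {x y : Submodule ℂ H} [y.HasOrthogonalProjection] (hx : x ∈ B)
    (hy : y ∈ B) : x ⊓ y ⊔ x ⊓ yᗮ = x := by
  rw [← hB.2.2.2.2.2 x hx y hy yᗮ (hB.orthogonal_mem hy),
    sup_orthogonal_of_hasOrthogonalProjection, inf_top_eq]

variable [FiniteDimensional ℂ H]

theorem le_or_le_orthogonal_of_mem_atomsOf {a x : Submodule ℂ H} (ha : a ∈ atomsOf B)
    (hx : x ∈ B) : a ≤ x ∨ a ≤ xᗮ := by
  by_cases hax : a ⊓ x = ⊥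
  · right
    calc a = a ⊓ x ⊔ a ⊓ xᗮ := (hB.inf_sup_inf_orthogonal ha.1.1 hx).symm
      _ ≤ xᗮ := by rw [hax, bot_sup_eq]; exact inf_le_right
  · exact .inl <| (ha.2 ⟨hB.inf_mem ha.1.1 hx, hax⟩ inf_le_left).trans inf_le_right

theorem isOrtho_of_mem_atomsOf {a c : Submodule ℂ H} (ha : a ∈ atomsOf B) (hc : c ∈ atomsOf B)
    (hac : a ≠ c) : a ⟂ c := by
  rcases hB.le_or_le_orthogonal_of_mem_atomsOf ha hc.1.1 with h | h
  · exact absurd (le_antisymm h (hc.2 ha.1 h)) hac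
  · exact isOrtho_iff_le.2 h

theorem le_sSup_atomsOf {x : Submodule ℂ H} (hx : x ∈ B) : x ≤ sSup (atomsOf B) := by
  induction x using WellFoundedLT.induction with
  | _ x ih =>
    by_cases hx0 : x = ⊥
    · exact hx0 ▸ bot_le
    obtain ⟨a, hax, ha⟩ :=
      exists_minimal_le_of_wellFoundedLT (fun y => y ∈ B ∧ y ≠ ⊥) x ⟨hx, hx0⟩
    have hlt : x ⊓ aᗮ < x := inf_le_left.lt_of_ne fun h =>
      ha.1.2 <| (orthogonal_disjoint a).eq_bot_of_le (hax.trans (h ▸ inf_le_right))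
    calc x = x ⊓ a ⊔ x ⊓ aᗮ := (hB.inf_sup_inf_orthogonal hx ha.1.1).symm
      _ ≤ sSup (atomsOf B) := sup_le (inf_le_right.trans (le_sSup ha))
        (ih _ hlt (hB.inf_mem hx (hB.orthogonal_mem ha.1.1)))

theorem orthogonalFamily_atomsOf :
    OrthogonalFamily ℂ (fun a : atomsOf B => (a : Submodule ℂ H))
      fun a => (a : Submodule ℂ H).subtypeₗᵢ :=
  orthogonalFamily_iff_pairwise.2 fun a c hac =>
    hB.isOrtho_of_mem_atomsOf a.2 c.2 (Subtype.coe_injective.ne hac)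

theorem finite_atomsOf : (atomsOf B).Finite :=
  Set.finite_coe_iff.1 <|
    WellFoundedLT.finite_of_iSupIndep hB.orthogonalFamily_atomsOf.independent fun a => a.2.1.2

theorem isInternal_atomsOf [DecidableEq (atomsOf B)] :
    DirectSum.IsInternal fun a : atomsOf B => (a : Submodule ℂ H) := by
  rw [hB.orthogonalFamily_atomsOf.isInternal_iff, ← sSup_eq_iSup',
    top_unique (hB.le_sSup_atomsOf hB.top_mem), top_orthogonal_eq_bot]

theorem exists_orthonormalBasis_subset_coordinateSubspaces :
    ∃ b : OrthonormalBasis (Fin (Module.finrank ℂ H)) ℂ H, B ⊆ b.coordinateSubspaces := by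
  classical
  have := hB.finite_atomsOf.fintype
  let b := hB.isInternal_atomsOf.collectedOrthonormalBasis hB.orthogonalFamily_atomsOf
    fun a => stdOrthonormalBasis ℂ a
  refine ⟨b.reindex (Fintype.equivFinOfCardEq (Module.finrank_eq_card_basis b.toBasis).symm),
    ?_⟩
  rw [b.coordinateSubspaces_reindex]
  intro x hx
  refine ⟨{p | b p ∈ x}, b.span_image_setOf_mem_eq fun p => ?_⟩
  have hp := hB.isInternal_atomsOf.collectedOrthonormalBasis_mem hB.orthogonalFamily_atomsOf
    (fun a => stdOrthonormalBasis ℂ a) p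
  exact (hB.le_or_le_orthogonal_of_mem_atomsOf p.1.2 hx).imp (· hp) (· hp)

end IsBooleanSublattice

theorem IsMaximalBooleanSublattice.exists_eq_coordinateSubspaces {H : Type*}
    [NormedAddCommGroup H] [InnerProductSpace ℂ H] [FiniteDimensional ℂ H]
    {B : Set (Submodule ℂ H)} (hB : IsMaximalBooleanSublattice B) :
    ∃ b : OrthonormalBasis (Fin (Module.finrank ℂ H)) ℂ H, B = b.coordinateSubspaces :=
  let ⟨b, hBb⟩ := hB.1.exists_orthonormalBasis_subset_coordinateSubspaces
  ⟨b, (hB.2 _ b.isBooleanSublattice_coordinateSubspaces hBb).symm⟩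

/-- Any two maximal Boolean sublattices of `Submodule ℂ H` are related by a unitary
operator: there is a linear isometry `U` of `H` onto itself whose induced map on
subspaces carries one onto the other. -/
theorem maximalBooleanSublattices_unitarily_equivalent {H : Type*}
    [NormedAddCommGroup H] [InnerProductSpace ℂ H] [FiniteDimensional ℂ H]
    (B B' : Set (Submodule ℂ H))
    (hB : IsMaximalBooleanSublattice B) (hB' : IsMaximalBooleanSublattice B') :
    ∃ U : H ≃ₗᵢ[ℂ] H,
      {K' : Submodule ℂ H | ∃ K ∈ B, K' = Submodule.map (U.toLinearEquiv : H →ₗ[ℂ] H) K} = B' := by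
  obtain ⟨b, rfl⟩ := hB.exists_eq_coordinateSubspaces
  obtain ⟨b', rfl⟩ := hB'.exists_eq_coordinateSubspaces
  let U := b.equiv b' (Equiv.refl _)
  have hbU : b.map U = b' := DFunLike.ext _ _ fun i => b.equiv_apply_basis b' _ i
  refine ⟨U, ?_⟩
  rw [← hbU, b.coordinateSubspaces_map]
  ext K
  simp only [Set.mem_ofPred_eq, Set.mem_image, eq_comm]
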